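/- arXiv:1202.2277 — 2 statements merged into one kernel-verified Lean document; each statement's English description precedes it below -/
import Mathlib

section
/- Let F be a probability measure supported in (-∞,1] with finite moment generating function near 0, let μ < E(F), and let u > D̃_inf(F,μ). Then limsup_{t→∞} (1/t)·log P(D̃_inf(F̂_t,μ) ≥ u and μ̂_t ≤ μ) ≤ −max{u, Λ*(μ)}. -/
open MeasureTheory ProbabilityTheory Set Filter
open scoped ENNReal NNReal Classical BoundedContinuousFunction

noncomputable section

/-- Kullback–Leibler divergence `D(F‖G)` between measures on ℝ
(`+∞` unless `F ≪ G` and `log (dF/dG)` is `F`-integrable). -/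
def KL (F G : Measure ℝ) : ℝ≥0∞ :=
  if F ≪ G ∧ Integrable (fun x => Real.log (F.rnDeriv G x).toReal) F
  then ENNReal.ofReal (∫ x, Real.log (F.rnDeriv G x).toReal ∂F) else ⊤

/-- `D_inf(F,μ;𝒜)`: infimum of `D(F‖G)` over probability measures `G` supported in
`(-∞,1]` with (finite) mean `E(G) > μ`.  (For `G` supported in `(-∞,1]` the mean is
well defined in `[-∞,1]`, and `E(G) > μ` holds iff `G` has integrable identity with
`∫ x dG > μ`.) -/
def DinfSemi (F : Measure ℝ) (μ : ℝ) : ℝ≥0∞ :=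
  ⨅ G ∈ {G : Measure ℝ | IsProbabilityMeasure G ∧ G (Set.Ioi 1) = 0 ∧
      Integrable (fun x : ℝ => x) G ∧ μ < ∫ x, x ∂G}, KL F G

/-- `D_inf(F,μ;𝒜_a)`: infimum of `D(F‖G)` over probability measures `G` supported in
`[a,1]` with mean `E(G) > μ`. -/
def DinfBdd (a : ℝ) (F : Measure ℝ) (μ : ℝ) : ℝ≥0∞ :=
  ⨅ G ∈ {G : Measure ℝ | IsProbabilityMeasure G ∧ G (Set.Icc a 1) = 1 ∧
      μ < ∫ x, x ∂G}, KL F G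

/-- `L(ν;F,μ) = ∫ log(1-(x-μ)ν) dF(x)`, as an extended real number in `[-∞,∞)`:
the value is `⊥ = -∞` when the integrand equals `-∞` on a non-`F`-null set or when
its (necessarily negative, for `F` supported in `(-∞,1]` with finite mean) part fails
to be integrable. -/
def LL (F : Measure ℝ) (μ ν : ℝ) : EReal :=
  if Integrable (fun x => Real.log (1 - (x - μ) * ν)) F ∧ F {x | 1 - (x - μ) * ν ≤ 0} = 0
  then ((∫ x, Real.log (1 - (x - μ) * ν) ∂F : ℝ) : EReal)
  else ⊥

/-- `D̃_inf(F,μ) = sup_{0 ≤ ν ≤ 1/(1-μ)} L(ν;F,μ)`. -/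
def Dtilde (F : Measure ℝ) (μ : ℝ) : EReal :=
  ⨆ ν ∈ Set.Icc (0 : ℝ) (1 - μ)⁻¹, LL F μ ν

/-- The moment generating function of `F` is finite in a neighborhood of the origin. -/
def MGFNearZero (F : Measure ℝ) : Prop :=
  ∃ ε > (0 : ℝ), ∀ l : ℝ, |l| < ε → Integrable (fun x => Real.exp (l * x)) F

/-- Fenchel–Legendre transform `Λ*(x) = sup_λ {λx - log ∫ e^{λu} dF(u)}` of the
logarithmic moment generating function of `F`. -/
def Legendre (F : Measure ℝ) (x : ℝ) : EReal :=
  ⨆ l : ℝ, ((l * x : ℝ) : EReal) -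
    ENNReal.log (∫⁻ y, ENNReal.ofReal (Real.exp (l * y)) ∂F)

/-- Empirical distribution `F̂_t = (1/t) ∑_{i<t} δ_{X_i}`. -/
def empMeas {Ω : Type*} [MeasurableSpace Ω] (X : ℕ → Ω → ℝ) (t : ℕ) (ω : Ω) : Measure ℝ :=
  (t : ℝ≥0∞)⁻¹ • ∑ i ∈ Finset.range t, Measure.dirac (X i ω)

/-- Empirical mean `μ̂_t = (1/t) ∑_{i<t} X_i`. -/
def empMean {Ω : Type*} (X : ℕ → Ω → ℝ) (t : ℕ) (ω : Ω) : ℝ :=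
  (∑ i ∈ Finset.range t, X i ω) / t

end


/-!
Both bounds are Chernoff bounds for i.i.d. sums. For `λ ≤ 0` the event `μ̂_t ≤ μ` has
probability at most `exp (t (log E e^{λX} - λμ))`, while for `λ > 0` the term
`λμ - log E e^{λX}` of `Λ*(μ)` is nonpositive by Jensen, since `μ < E(F)`, hence dominated by
`u > D̃_inf(F, μ) ≥ L(0; F, μ) = 0`.

For the other bound, `D̃_inf(F̂_t, μ) > u - ε` provides some `ν ∈ [0, 1/(1-μ)]` with
`∑ log (1 - (X_i - μ) ν) > t (u - ε)`. For `ν ≤ a` every summand is at most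
`log (1 + (μ - X_i)⁺ a)`, and moving `ν` down to the geometric grid `a e^{εk}` costs at most `ε`
per summand, so the event is covered by finitely many events `∑ g (X_i) ≥ t (u - 2ε)` with `g`
independent of `ν`. As `E[1 - (X - μ) a e^{εk}] ≤ 1` and `E[1 + (μ - X)⁺ a] ≤ e^ε`, the Chernoff
bound at exponent `1` makes each of them at most `exp (t (2ε - u))`.
-/

open Real Topology

section Distribution

variable {F : Measure ℝ}

lemma MGFNearZero.integrable_id (h : MGFNearZero F) : Integrable (fun x : ℝ => x) F := by
  obtain ⟨ε, hε, hint⟩ := h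
  have hε2 : |ε / 2| < ε := by rw [abs_of_pos (half_pos hε)]; exact half_lt_self hε
  simpa using integrable_pow_of_integrable_exp_mul (half_pos hε).ne' (hint _ hε2)
    (hint _ (by rwa [abs_neg])) 1

lemma ae_le_one (hsupp : F (Ioi 1) = 0) : ∀ᵐ x ∂F, x ≤ 1 := by
  rw [ae_iff]; simpa [not_le, Ioi] using hsupp

variable [IsProbabilityMeasure F]

lemma integral_id_le_one (hsupp : F (Ioi 1) = 0) (hint : Integrable (fun x : ℝ => x) F) :
    ∫ x, x ∂F ≤ 1 := by
  simpa using integral_mono_ae hint (integrable_const 1) (ae_le_one hsupp)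

lemma mul_integral_id_le_log_integral_exp (hint : Integrable (fun x : ℝ => x) F) {l : ℝ}
    (hl : Integrable (fun x => exp (l * x)) F) :
    l * ∫ x, x ∂F ≤ log (∫ x, exp (l * x) ∂F) := by
  rw [le_log_iff_exp_le (integral_exp_pos hl), ← integral_const_mul]
  exact convexOn_exp.map_integral_le continuousOn_exp isClosed_univ
    (ae_of_all _ fun _ => mem_univ _) (hint.const_mul l) hl

lemma zero_le_dtilde {μ : ℝ} (hμ1 : μ < 1) : 0 ≤ Dtilde F μ := by
  have hLL : LL F μ 0 = 0 := by simp [LL, not_le.mpr one_pos]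
  rw [← hLL]
  exact le_biSup (LL F μ) ⟨le_rfl, (inv_pos.mpr (sub_pos.mpr hμ1)).le⟩

lemma legendre_le {x : ℝ} {c : EReal}
    (h : ∀ l, Integrable (fun y => exp (l * y)) F →
      ((l * x - log (∫ y, exp (l * y) ∂F) : ℝ) : EReal) ≤ c) :
    Legendre F x ≤ c := by
  refine iSup_le fun l => ?_
  by_cases hl : Integrable (fun y => exp (l * y)) F
  · rw [← ofReal_integral_eq_lintegral_ofReal hl (ae_of_all _ fun _ => (exp_pos _).le),
      ENNReal.log_ofReal_of_pos (integral_exp_pos hl), ← EReal.coe_sub]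
    exact h l hl
  · have htop : ∫⁻ y, ENNReal.ofReal (exp (l * y)) ∂F = ⊤ := by
      by_contra hfin
      exact hl ⟨by fun_prop, by
        rwa [hasFiniteIntegral_iff_ofReal (ae_of_all _ fun _ => (exp_pos _).le),
          lt_top_iff_ne_top]⟩
    simp [htop]

end Distribution

section Empirical

variable {Ω : Type*} (X : ℕ → Ω → ℝ)

lemma sum_le_mul_of_empMean_le {t : ℕ} {ω : Ω} {μ : ℝ} (h : empMean X t ω ≤ μ) :
    ∑ i ∈ Finset.range t, X i ω ≤ t * μ := by
  rcases Nat.eq_zero_or_pos t with rfl | ht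
  · simp
  · rwa [empMean, div_le_iff₀ (by exact_mod_cast ht), mul_comm] at h

variable [MeasurableSpace Ω] (t : ℕ) (ω : Ω)

lemma integral_empMeas (f : ℝ → ℝ) :
    ∫ x, f x ∂(empMeas X t ω) = (∑ i ∈ Finset.range t, f (X i ω)) / t := by
  rw [empMeas, integral_smul_measure,
    integral_finsetSum_measure fun i _ => integrable_dirac enorm_lt_top]
  simp [div_eq_inv_mul]

lemma notMem_of_empMeas_eq_zero {S : Set ℝ} (h : empMeas X t ω S = 0) {i : ℕ} (hi : i < t) :
    X i ω ∉ S := by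
  simp_all [empMeas]

lemma exists_lt_sum_log_of_lt_dtilde_empMeas {t : ℕ} (ht : 0 < t) {μ c : ℝ}
    (h : (c : EReal) < Dtilde (empMeas X t ω) μ) :
    ∃ ν ∈ Icc (0 : ℝ) (1 - μ)⁻¹, (∀ i < t, 0 < 1 - (X i ω - μ) * ν) ∧
      t * c < ∑ i ∈ Finset.range t, log (1 - (X i ω - μ) * ν) := by
  simp only [Dtilde, lt_iSup_iff] at h
  obtain ⟨ν, hν, hc⟩ := h
  rw [LL] at hc
  split_ifs at hc with hLL
  · refine ⟨ν, hν, fun i hi => ?_, ?_⟩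
    · simpa using notMem_of_empMeas_eq_zero X t ω hLL.2 hi
    · rw [integral_empMeas, EReal.coe_lt_coe_iff, lt_div_iff₀ (by exact_mod_cast ht)] at hc
      linarith
  · exact absurd hc not_lt_bot

end Empirical

lemma log_one_sub_mul_le_log_one_add_posPart_mul {x μ ν a : ℝ} (hν : 0 ≤ ν) (hνa : ν ≤ a)
    (hpos : 0 < 1 - (x - μ) * ν) :
    log (1 - (x - μ) * ν) ≤ log (1 + max (μ - x) 0 * a) := by
  refine log_le_log hpos ?_
  have h1 : (μ - x) * ν ≤ max (μ - x) 0 * ν := mul_le_mul_of_nonneg_right (le_max_left _ _) hν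
  have h2 : max (μ - x) 0 * ν ≤ max (μ - x) 0 * a :=
    mul_le_mul_of_nonneg_left hνa (le_max_right _ _)
  linarith

lemma log_one_sub_mul_le_log_one_sub_mul_add {x μ ν a ε : ℝ} (haν : a ≤ ν)
    (hνa : ν ≤ a * exp ε) (hε : 0 ≤ ε) (hpos : 0 < 1 - (x - μ) * ν) :
    log (1 - (x - μ) * ν) ≤ log (1 - (x - μ) * a) + ε := by
  have hle : 1 - (x - μ) * ν ≤ exp ε * (1 - (x - μ) * a) := by
    rcases le_or_gt x μ with hx | hx
    · nlinarith [one_le_exp hε]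
    · have h1 : (x - μ) * a ≤ (x - μ) * ν := mul_le_mul_of_nonneg_left haν (sub_nonneg.mpr hx.le)
      nlinarith [one_le_exp hε]
  have hpos' : 0 < 1 - (x - μ) * a := pos_of_mul_pos_right (hpos.trans_le hle) (exp_pos ε).le
  calc log (1 - (x - μ) * ν) ≤ log (exp ε * (1 - (x - μ) * a)) := log_le_log hpos hle
    _ = log (1 - (x - μ) * a) + ε := by rw [log_mul (exp_pos ε).ne' hpos'.ne', log_exp, add_comm]

lemma exists_mul_exp_mul_le_le {a ε ν : ℝ} {K : ℕ} (haν : a < ν) (hνK : ν ≤ a * exp (ε * K)) :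
    ∃ k < K, a * exp (ε * k) ≤ ν ∧ ν ≤ a * exp (ε * k) * exp ε := by
  have hex : ∃ n : ℕ, ν ≤ a * exp (ε * n) := ⟨K, hνK⟩
  have hn0 : Nat.find hex ≠ 0 := fun h0 => by
    have := Nat.find_spec hex
    rw [h0] at this
    simp at this
    linarith
  refine ⟨Nat.find hex - 1, by have := Nat.find_min' hex hνK; omega, ?_, ?_⟩
  · exact le_of_not_ge (Nat.find_min hex (by omega))
  · have := Nat.find_spec hex
    rwa [mul_assoc, ← exp_add, ← mul_add_one, ← Nat.cast_add_one, Nat.sub_add_cancel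
      (Nat.one_le_iff_ne_zero.mpr hn0)]

lemma exists_lt_mul_exp_mul {a ε : ℝ} (ha : 0 < a) (hε : 0 < ε) (b : ℝ) :
    ∃ K : ℕ, b ≤ a * exp (ε * K) ∧ ∀ k < K, a * exp (ε * k) < b := by
  have hex : ∃ n : ℕ, b ≤ a * exp (ε * n) := by
    obtain ⟨n, hn⟩ := exists_nat_ge (b / (a * ε))
    refine ⟨n, ?_⟩
    have hb : b ≤ a * (ε * n) := by rw [div_le_iff₀ (by positivity)] at hn; linarith
    nlinarith [add_one_le_exp (ε * n)]
  exact ⟨Nat.find hex, Nat.find_spec hex, fun k hk => lt_of_not_ge (Nat.find_min hex hk)⟩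

lemma sum_log_cover {x : ℕ → ℝ} {t K : ℕ} {μ ν a ε s : ℝ} (hε : 0 ≤ ε)
    (hν : ν ∈ Icc 0 (a * exp (ε * K))) (hpos : ∀ i < t, 0 < 1 - (x i - μ) * ν)
    (hs : t * s ≤ ∑ i ∈ Finset.range t, log (1 - (x i - μ) * ν)) :
    t * s ≤ ∑ i ∈ Finset.range t, log (1 + max (μ - x i) 0 * a) ∨
      ∃ k < K, t * (s - ε) ≤
        ∑ i ∈ Finset.range t, log (1 - (x i - μ) * (a * exp (ε * k))) := by
  rcases le_or_gt ν a with hνa | haν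
  · refine Or.inl (hs.trans (Finset.sum_le_sum fun i hi => ?_))
    exact log_one_sub_mul_le_log_one_add_posPart_mul hν.1 hνa (hpos i (Finset.mem_range.mp hi))
  · obtain ⟨k, hk, hkν, hνk⟩ := exists_mul_exp_mul_le_le haν hν.2
    refine Or.inr ⟨k, hk, ?_⟩
    have hsum := Finset.sum_le_sum fun i (hi : i ∈ Finset.range t) =>
      log_one_sub_mul_le_log_one_sub_mul_add (x := x i) (μ := μ) hkν hνk hε
        (hpos i (Finset.mem_range.mp hi))
    rw [Finset.sum_add_distrib, Finset.sum_const, Finset.card_range, nsmul_eq_mul] at hsum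
    linarith

lemma limsup_inv_mul_log_le {p : ℕ → ℝ≥0∞} {C c : ℝ} (hC : 0 < C)
    (h : ∀ᶠ t : ℕ in atTop, p t ≤ ENNReal.ofReal (C * exp (t * c))) :
    limsup (fun t : ℕ => (((t : ℝ)⁻¹ : ℝ) : EReal) * ENNReal.log (p t)) atTop ≤ c := by
  have hlim : Tendsto (fun t : ℕ => ((log C / t + c : ℝ) : EReal)) atTop (𝓝 c) :=
    (continuous_coe_real_ereal.tendsto c).comp
      (by simpa using (tendsto_const_div_atTop_nhds_zero_nat (log C)).add_const c)
  refine (limsup_le_limsup ?_).trans hlim.limsup_eq.le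
  filter_upwards [h, eventually_gt_atTop 0] with t ht ht0
  have htpos : (0 : ℝ) < t := by exact_mod_cast ht0
  have hlog : ENNReal.log (p t) ≤ ((log C + t * c : ℝ) : EReal) := by
    refine (ENNReal.log_le_log_iff.mpr ht).trans_eq ?_
    rw [ENNReal.log_ofReal_of_pos (by positivity), log_mul hC.ne' (exp_pos _).ne', log_exp]
  calc (((t : ℝ)⁻¹ : ℝ) : EReal) * ENNReal.log (p t)
      ≤ (((t : ℝ)⁻¹ : ℝ) : EReal) * ((log C + t * c : ℝ) : EReal) :=
        mul_le_mul_of_nonneg_left hlog (by exact_mod_cast (inv_pos.mpr htpos).le)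
    _ = ((log C / t + c : ℝ) : EReal) := by
        rw [← EReal.coe_mul]
        congr 1
        field_simp

lemma measure_union_biUnion_range_le {α : Type*} [MeasurableSpace α] (P : Measure α)
    {A₀ : Set α} {A : ℕ → Set α} {K : ℕ} {b : ℝ} (hb : 0 ≤ b)
    (hA₀ : P A₀ ≤ ENNReal.ofReal b) (hA : ∀ k < K, P (A k) ≤ ENNReal.ofReal b) :
    P (A₀ ∪ ⋃ k ∈ Finset.range K, A k) ≤ ENNReal.ofReal ((K + 1) * b) := by
  calc P (A₀ ∪ ⋃ k ∈ Finset.range K, A k)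
      ≤ P A₀ + ∑ k ∈ Finset.range K, P (A k) :=
        (measure_union_le _ _).trans (add_le_add_right (measure_biUnion_finset_le _ _) _)
    _ ≤ ENNReal.ofReal b + ∑ _k ∈ Finset.range K, ENNReal.ofReal b :=
        add_le_add hA₀ (Finset.sum_le_sum fun k hk => hA k (Finset.mem_range.mp hk))
    _ = ENNReal.ofReal ((K + 1) * b) := by
        rw [Finset.sum_const, Finset.card_range, nsmul_eq_mul, add_one_mul,
          ENNReal.ofReal_add (by positivity) hb, ENNReal.ofReal_mul (by positivity),
          ENNReal.ofReal_natCast, add_comm]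

section Chernoff

variable {Ω : Type*} [MeasurableSpace Ω] {P : Measure Ω} [IsProbabilityMeasure P]
  {F : Measure ℝ} {X : ℕ → Ω → ℝ}

lemma measure_mul_le_sum_comp_le (hX : ∀ i, Measurable (X i)) (hindep : iIndepFun X P)
    (hdist : ∀ i, P.map (X i) = F) {g : ℝ → ℝ} (hg : Measurable g)
    (hgint : Integrable (fun x => exp (g x)) F) (t : ℕ) (s : ℝ) :
    P {ω | t * s ≤ ∑ i ∈ Finset.range t, g (X i ω)} ≤
      ENNReal.ofReal (exp (-(t * s)) * (∫ x, exp (g x) ∂F) ^ t) := by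
  have hgX : iIndepFun (fun i ω => g (X i ω)) P := hindep.comp (fun _ => g) fun _ => hg
  have hmgf : ∀ i, mgf (fun ω => g (X i ω)) P 1 = ∫ x, exp (g x) ∂F := fun i => by
    rw [← hdist i, ← Function.comp_def, ← mgf_map (hX i).aemeasurable (by fun_prop)]
    simp [mgf]
  have hint : ∀ i ∈ Finset.range t, Integrable (fun ω => exp (1 * g (X i ω))) P := fun i _ => by
    simpa [Function.comp_def] using (integrable_map_measure (by fun_prop) (hX i).aemeasurable).mp
      (hdist i ▸ hgint)
  have hchernoff := measure_ge_le_exp_mul_mgf (t * s) zero_le_one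
    (hgX.integrable_exp_mul_sum (fun i => hg.comp (hX i)) hint)
  rw [hgX.mgf_sum (fun i => hg.comp (hX i)), Finset.prod_congr rfl fun i _ => hmgf i,
    Finset.prod_const, Finset.card_range, neg_one_mul] at hchernoff
  rw [← ofReal_measureReal]
  refine ENNReal.ofReal_le_ofReal (le_of_eq_of_le ?_ hchernoff)
  simp [Finset.sum_apply]

lemma measure_sum_le_mul_le [IsProbabilityMeasure F] (hX : ∀ i, Measurable (X i))
    (hindep : iIndepFun X P) (hdist : ∀ i, P.map (X i) = F) {l : ℝ} (hl : l ≤ 0)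
    (hlint : Integrable (fun x => exp (l * x)) F) (t : ℕ) (μ : ℝ) :
    P {ω | ∑ i ∈ Finset.range t, X i ω ≤ t * μ} ≤
      ENNReal.ofReal (exp (t * (log (∫ x, exp (l * x) ∂F) - l * μ))) := by
  have hsub : {ω | ∑ i ∈ Finset.range t, X i ω ≤ t * μ} ⊆
      {ω | t * (l * μ) ≤ ∑ i ∈ Finset.range t, l * X i ω} :=
    fun ω (hω : ∑ i ∈ Finset.range t, X i ω ≤ t * μ) => by
      change t * (l * μ) ≤ ∑ i ∈ Finset.range t, l * X i ω
      rw [← Finset.mul_sum]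
      nlinarith
  refine (measure_mono hsub).trans ((measure_mul_le_sum_comp_le hX hindep hdist
    (measurable_const_mul l) hlint t (l * μ)).trans (le_of_eq ?_))
  rw [← exp_log (integral_exp_pos hlint), ← exp_nat_mul, ← exp_add, log_exp]
  ring_nf

lemma measure_mul_le_sum_log_one_sub_mul_le [IsProbabilityMeasure F] (hX : ∀ i, Measurable (X i))
    (hindep : iIndepFun X P) (hdist : ∀ i, P.map (X i) = F) (hsupp : F (Ioi 1) = 0)
    (hint : Integrable (fun x : ℝ => x) F) {μ a : ℝ} (hμ : μ ≤ ∫ x, x ∂F) (hμ1 : μ < 1)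
    (ha : 0 ≤ a) (ha1 : a < (1 - μ)⁻¹) (t : ℕ) (s : ℝ) :
    P {ω | t * s ≤ ∑ i ∈ Finset.range t, log (1 - (X i ω - μ) * a)} ≤
      ENNReal.ofReal (exp (-(t * s))) := by
  have hμa : (1 - μ) * a < 1 :=
    (mul_lt_mul_of_pos_left ha1 (sub_pos.mpr hμ1)).trans_eq (mul_inv_cancel₀ (by linarith))
  have hae : (fun x => exp (log (1 - (x - μ) * a))) =ᵐ[F] fun x => 1 - (x - μ) * a := by
    filter_upwards [ae_le_one hsupp] with x hx
    exact exp_log (by nlinarith)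
  have hshift : Integrable (fun x => (x - μ) * a) F := (hint.sub (integrable_const μ)).mul_const a
  have hlin : Integrable (fun x => 1 - (x - μ) * a) F := (integrable_const 1).sub hshift
  have hmean : ∫ x, exp (log (1 - (x - μ) * a)) ∂F ≤ 1 := by
    rw [integral_congr_ae hae, integral_sub (integrable_const 1) hshift, integral_mul_const,
      integral_sub hint (integrable_const μ)]
    simp only [integral_const, probReal_univ, smul_eq_mul, one_mul]
    nlinarith
  refine (measure_mul_le_sum_comp_le hX hindep hdist (by fun_prop) (hlin.congr hae.symm) t s).trans
    (ENNReal.ofReal_le_ofReal (mul_le_of_le_one_right (exp_pos _).le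
      (pow_le_one₀ (integral_nonneg fun _ => (exp_pos _).le) hmean)))

lemma measure_mul_le_sum_log_one_add_posPart_mul_le [IsProbabilityMeasure F]
    (hX : ∀ i, Measurable (X i)) (hindep : iIndepFun X P) (hdist : ∀ i, P.map (X i) = F)
    (hint : Integrable (fun x : ℝ => x) F) {μ a : ℝ} (ha : 0 ≤ a) (t : ℕ) (s : ℝ) :
    P {ω | t * s ≤ ∑ i ∈ Finset.range t, log (1 + max (μ - X i ω) 0 * a)} ≤
      ENNReal.ofReal (exp (-(t * s)) * (1 + (∫ x, max (μ - x) 0 ∂F) * a) ^ t) := by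
  have hexp : (fun x => exp (log (1 + max (μ - x) 0 * a))) = fun x => 1 + max (μ - x) 0 * a :=
    funext fun x => exp_log (by positivity)
  have hpart : Integrable (fun x => max (μ - x) 0 * a) F :=
    ((integrable_const μ).sub hint).pos_part.mul_const a
  have hbound := measure_mul_le_sum_comp_le hX hindep hdist
    (g := fun x => log (1 + max (μ - x) 0 * a)) (by fun_prop)
    (by rw [hexp]; exact (integrable_const 1).add hpart) t s
  rwa [hexp, integral_add (integrable_const 1) hpart, integral_mul_const, integral_const,
    probReal_univ, one_smul] at hbound

lemma exists_pos_one_add_mul_le_exp {M ε : ℝ} (hM : 0 ≤ M) (hε : 0 < ε) :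
    ∃ a > 0, 1 + M * a ≤ exp ε := by
  refine ⟨(exp ε - 1) / (M + 1), div_pos (by linarith [add_one_lt_exp hε.ne']) (by linarith), ?_⟩
  have h : M * ((exp ε - 1) / (M + 1)) ≤ exp ε - 1 := by
    rw [mul_div_assoc', div_le_iff₀ (by linarith)]
    nlinarith [add_one_lt_exp hε.ne']
  linarith

lemma measure_le_dtilde_empMeas_le [IsProbabilityMeasure F] (hX : ∀ i, Measurable (X i))
    (hindep : iIndepFun X P) (hdist : ∀ i, P.map (X i) = F) (hsupp : F (Ioi 1) = 0)
    (hint : Integrable (fun x : ℝ => x) F) {μ : ℝ} (hμ : μ ≤ ∫ x, x ∂F) (hμ1 : μ < 1)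
    {ε : ℝ} (hε : 0 < ε) :
    ∃ C > 0, ∀ t : ℕ, 0 < t → ∀ u : ℝ,
      P {ω | (u : EReal) ≤ Dtilde (empMeas X t ω) μ} ≤
        ENNReal.ofReal (C * exp (t * (2 * ε - u))) := by
  obtain ⟨a, ha, haM⟩ := exists_pos_one_add_mul_le_exp
    (integral_nonneg fun x => le_max_right (μ - x) 0) hε
  obtain ⟨K, hK, hKlt⟩ := exists_lt_mul_exp_mul ha hε (1 - μ)⁻¹
  refine ⟨K + 1, by positivity, fun t ht u => ?_⟩
  set A₀ := {ω | t * (u - ε) ≤ ∑ i ∈ Finset.range t, log (1 + max (μ - X i ω) 0 * a)}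
  set A : ℕ → Set Ω := fun k => {ω | t * (u - ε - ε) ≤
    ∑ i ∈ Finset.range t, log (1 - (X i ω - μ) * (a * exp (ε * k)))}
  have hcover : {ω | (u : EReal) ≤ Dtilde (empMeas X t ω) μ} ⊆ A₀ ∪ ⋃ k ∈ Finset.range K, A k := by
    intro ω hω
    obtain ⟨ν, hν, hpos, hsum⟩ := exists_lt_sum_log_of_lt_dtilde_empMeas X ω ht
      ((EReal.coe_lt_coe_iff.mpr (sub_lt_self u hε)).trans_le hω)
    rcases sum_log_cover hε.le ⟨hν.1, hν.2.trans hK⟩ hpos hsum.le with h | ⟨k, hk, h⟩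
    · exact Or.inl h
    · exact Or.inr (mem_biUnion (Finset.mem_range.mpr hk) h)
  have hA₀ : P A₀ ≤ ENNReal.ofReal (exp (t * (2 * ε - u))) := by
    refine (measure_mul_le_sum_log_one_add_posPart_mul_le hX hindep hdist hint ha.le t _).trans
      (ENNReal.ofReal_le_ofReal ?_)
    calc exp (-(t * (u - ε))) * (1 + (∫ x, max (μ - x) 0 ∂F) * a) ^ t
        ≤ exp (-(t * (u - ε))) * exp ε ^ t := by gcongr
      _ = exp (t * (2 * ε - u)) := by rw [← exp_nat_mul, ← exp_add]; ring_nf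
  have hA : ∀ k < K, P (A k) ≤ ENNReal.ofReal (exp (t * (2 * ε - u))) := fun k hk =>
    (measure_mul_le_sum_log_one_sub_mul_le hX hindep hdist hsupp hint hμ hμ1 (by positivity)
      (hKlt k hk) t _).trans (ENNReal.ofReal_le_ofReal (le_of_eq (by ring_nf)))
  exact (measure_mono hcover).trans (measure_union_biUnion_range_le P (by positivity) hA₀ hA)

lemma limsup_inv_mul_log_measure_le_neg [IsProbabilityMeasure F] (hX : ∀ i, Measurable (X i))
    (hindep : iIndepFun X P) (hdist : ∀ i, P.map (X i) = F) (hsupp : F (Ioi 1) = 0)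
    (hint : Integrable (fun x : ℝ => x) F) {μ : ℝ} (hμ : μ ≤ ∫ x, x ∂F) (hμ1 : μ < 1)
    {u : ℝ} {E : ℕ → Set Ω} (hE : ∀ t, E t ⊆ {ω | (u : EReal) ≤ Dtilde (empMeas X t ω) μ}) :
    limsup (fun t : ℕ => (((t : ℝ)⁻¹ : ℝ) : EReal) * ENNReal.log (P (E t))) atTop ≤
      ((-u : ℝ) : EReal) := by
  refine EReal.le_of_forall_lt_iff_le.mp fun z hz => ?_
  have hε : 0 < (z + u) / 2 := by have := EReal.coe_lt_coe_iff.mp hz; linarith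
  obtain ⟨C, hC, hbound⟩ := measure_le_dtilde_empMeas_le hX hindep hdist hsupp hint hμ hμ1 hε
  refine (limsup_inv_mul_log_le (c := 2 * ((z + u) / 2) - u) hC ?_).trans
    (EReal.coe_le_coe_iff.mpr (by linarith))
  filter_upwards [eventually_gt_atTop 0] with t ht
  exact (measure_mono (hE t)).trans (hbound t ht u)

end Chernoff

/-- Asymptotic upper large deviation bound (Lemma
`upper_asymptotic`): for i.i.d. samples `X_i ~ F` (`F` supported in `(-∞,1]` with
finite mgf near `0`), `μ < E(F)` and `u > D̃_inf(F,μ)`,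
`limsup_{t→∞} (1/t) log P(D̃_inf(F̂_t,μ) ≥ u ∧ μ̂_t ≤ μ) ≤ -max{u, Λ*(μ)}`. -/
theorem stmt5 {Ω : Type*} [MeasurableSpace Ω] (P : Measure Ω) [IsProbabilityMeasure P]
    (F : Measure ℝ) [IsProbabilityMeasure F] (hsupp : F (Set.Ioi 1) = 0)
    (hmgf : MGFNearZero F)
    (X : ℕ → Ω → ℝ) (hX : ∀ i, Measurable (X i))
    (hindep : iIndepFun X P)
    (hdist : ∀ i, Measure.map (X i) P = F)
    (μ u : ℝ) (hμ : μ < ∫ x, x ∂F) (hu : Dtilde F μ < (u : EReal)) :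
    Filter.limsup (fun t : ℕ =>
        (((t : ℝ)⁻¹ : ℝ) : EReal) *
          ENNReal.log (P {ω | (u : EReal) ≤ Dtilde (empMeas X t ω) μ ∧ empMean X t ω ≤ μ}))
      Filter.atTop
      ≤ -(max (u : EReal) (Legendre F μ)) := by
  have hint := hmgf.integrable_id
  have hμ1 : μ < 1 := hμ.trans_le (integral_id_le_one hsupp hint)
  have hu0 : (0 : EReal) ≤ u := (zero_le_dtilde hμ1).trans hu.le
  set L := limsup (fun t : ℕ => (((t : ℝ)⁻¹ : ℝ) : EReal) *
    ENNReal.log (P {ω | (u : EReal) ≤ Dtilde (empMeas X t ω) μ ∧ empMean X t ω ≤ μ})) atTop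
  have hLu : (u : EReal) ≤ -L := EReal.le_neg_of_le_neg <| EReal.coe_neg u ▸
    limsup_inv_mul_log_measure_le_neg hX hindep hdist hsupp hint hμ.le hμ1 fun _ _ hω => hω.1
  have hLl : ∀ l ≤ 0, Integrable (fun x => exp (l * x)) F →
      L ≤ ((log (∫ x, exp (l * x) ∂F) - l * μ : ℝ) : EReal) := fun l hl hlint =>
    limsup_inv_mul_log_le one_pos (Eventually.of_forall fun t => by
      rw [one_mul]
      exact (measure_mono fun ω hω => sum_le_mul_of_empMean_le X hω.2).trans
        (measure_sum_le_mul_le hX hindep hdist hl hlint t μ))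
  have hLeg : Legendre F μ ≤ -L := legendre_le fun l hlint => by
    rcases le_or_gt l 0 with hl | hl
    · refine EReal.le_neg_of_le_neg ?_
      rw [← EReal.coe_neg, neg_sub]
      exact hLl l hl hlint
    · have hJensen := mul_integral_id_le_log_integral_exp hint hlint
      have hneg : l * μ - log (∫ x, exp (l * x) ∂F) ≤ 0 := by nlinarith
      exact (EReal.coe_le_coe_iff.mpr hneg).trans (hu0.trans hLu)
  exact EReal.le_neg_of_le_neg (max_le hLu hLeg)
end

section
/- Let F be a probability measure supported in (-∞,1] with finite mean and let μ < 1. Then the function ν ↦ L(ν;F,μ) = ∫ log(1−(x−μ)ν) dF(x) is twice differentiable on the open interval (0, 1/(1−μ)), with first derivative L'(ν;F,μ) = −∫ (x−μ)/(1−(x−μ)ν) dF(x) and second derivative L''(ν;F,μ) = −∫ (x−μ)²/(1−(x−μ)ν)² dF(x). -/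
open MeasureTheory ProbabilityTheory Set Filter
open scoped ENNReal NNReal Classical BoundedContinuousFunction

/-! Differentiate under the integral sign. On a neighbourhood `(ν/2, b)` of `ν` with
`(1 - μ) b < 1`, every `x ≤ 1` satisfies `1 - (x - μ) t ≥ 1 - (1 - μ) b > 0`, which makes
`(x - μ) / (1 - (x - μ) t)` uniformly bounded in `x` and `t`; a constant therefore dominates
both derivatives. -/

open Topology

theorem sub_mul_le_one_sub_mul {x μ t b : ℝ} (hx : x ≤ 1) (hμ : μ ≤ 1) (ht : 0 ≤ t)
    (htb : t ≤ b) : (x - μ) * t ≤ (1 - μ) * b := by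
  rcases le_or_gt μ x with h | h
  · exact mul_le_mul (by linarith) htb ht (by linarith)
  · nlinarith

theorem abs_div_one_sub_mul_le {c t a δ : ℝ} (ha : 0 < a) (hat : a ≤ t) (hδ : 0 < δ)
    (hδ1 : δ ≤ 1) (h : δ ≤ 1 - c * t) : |c / (1 - c * t)| ≤ (a * δ)⁻¹ := by
  have hpos : 0 < 1 - c * t := hδ.trans_le h
  rw [abs_div, abs_of_pos hpos, div_le_iff₀ hpos, ← div_eq_inv_mul,
    le_div_iff₀ (by positivity)]
  rcases le_or_gt 0 c with hc | hc
  · rw [abs_of_nonneg hc]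
    nlinarith [mul_nonneg (mul_nonneg hc (sub_nonneg.2 hat)) hδ.le]
  · rw [abs_of_neg hc]
    nlinarith [mul_nonneg (neg_nonneg.2 hc.le) (mul_nonneg ha.le (sub_nonneg.2 hδ1))]

theorem abs_log_one_sub_mul_le {c t δ : ℝ} (hδ : 0 < δ) (h : δ ≤ 1 - c * t) :
    |Real.log (1 - c * t)| ≤ |Real.log δ| + |c * t| := by
  rw [abs_le]
  constructor
  · linarith [Real.log_le_log hδ h, neg_abs_le (Real.log δ), abs_nonneg (c * t)]
  · linarith [Real.log_le_sub_one_of_pos (hδ.trans_le h), neg_le_abs (c * t),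
      abs_nonneg (Real.log δ)]

theorem hasDerivAt_log_one_sub_mul {c t : ℝ} (h : 1 - c * t ≠ 0) :
    HasDerivAt (fun s => Real.log (1 - c * s)) (-(c / (1 - c * t))) t :=
  ((((hasDerivAt_id t).const_mul c).const_sub 1).log h).congr_deriv (by simp [neg_div])

theorem hasDerivAt_div_one_sub_mul {c t : ℝ} (h : 1 - c * t ≠ 0) :
    HasDerivAt (fun s => c / (1 - c * s)) (c ^ 2 / (1 - c * t) ^ 2) t :=
  ((hasDerivAt_const t c).div (((hasDerivAt_id t).const_mul c).const_sub 1) h).congr_deriv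
    (by simp [sq])

theorem eventually_abs_div_one_sub_mul_le {μ ν : ℝ} (hν : ν ∈ Ioo 0 (1 - μ)⁻¹) :
    ∃ C, ∀ᶠ t in 𝓝 ν, ∀ x ≤ 1,
      0 < 1 - (x - μ) * t ∧ |(x - μ) / (1 - (x - μ) * t)| ≤ C := by
  obtain ⟨hν0, hν1⟩ := hν
  have hμ : 0 < 1 - μ := inv_pos.mp (hν0.trans hν1)
  obtain ⟨b, hνb, hb⟩ := exists_between hν1
  have hδ : 0 < 1 - (1 - μ) * b := sub_pos.2 ((lt_inv_mul_iff₀ hμ).1 (by simpa))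
  have hδ1 : 1 - (1 - μ) * b ≤ 1 := by nlinarith
  refine ⟨(ν / 2 * (1 - (1 - μ) * b))⁻¹, ?_⟩
  filter_upwards [Ioo_mem_nhds (half_lt_self hν0) hνb] with t ht x hx
  have hδx : 1 - (1 - μ) * b ≤ 1 - (x - μ) * t := by
    linarith [sub_mul_le_one_sub_mul hx (sub_nonneg.1 hμ.le)
      ((half_pos hν0).le.trans ht.1.le) ht.2.le]
  exact ⟨by linarith, abs_div_one_sub_mul_le (half_pos hν0) ht.1.le hδ hδ1 hδx⟩

section

variable {F : Measure ℝ} [IsFiniteMeasure F] {μ ν : ℝ}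

theorem integrable_log_one_sub_mul (hle : ∀ᵐ x ∂F, x ≤ 1) (hint : Integrable (fun x => x) F)
    (hν : ν ∈ Ioo 0 (1 - μ)⁻¹) : Integrable (fun x => Real.log (1 - (x - μ) * ν)) F := by
  have hμ : 0 < 1 - μ := inv_pos.mp (hν.1.trans hν.2)
  have hδ : 0 < 1 - (1 - μ) * ν := sub_pos.2 ((lt_inv_mul_iff₀ hμ).1 (by simpa using hν.2))
  refine Integrable.mono' ((integrable_const |Real.log (1 - (1 - μ) * ν)|).add
    ((hint.sub (integrable_const μ)).abs.mul_const ν))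
    (by fun_prop : Measurable _).aestronglyMeasurable ?_
  filter_upwards [hle] with x hx
  have hδx : 1 - (1 - μ) * ν ≤ 1 - (x - μ) * ν := by
    linarith [sub_mul_le_one_sub_mul hx (sub_nonneg.1 hμ.le) hν.1.le le_rfl]
  simpa [abs_mul, abs_of_pos hν.1] using abs_log_one_sub_mul_le hδ hδx

theorem hasDerivAt_integral_log_one_sub_mul (hle : ∀ᵐ x ∂F, x ≤ 1)
    (hint : Integrable (fun x => x) F) (hν : ν ∈ Ioo 0 (1 - μ)⁻¹) :
    HasDerivAt (fun ν' => ∫ x, Real.log (1 - (x - μ) * ν') ∂F)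
      (-∫ x, (x - μ) / (1 - (x - μ) * ν) ∂F) ν := by
  obtain ⟨C, hC⟩ := eventually_abs_div_one_sub_mul_le hν
  obtain ⟨s, hs, hsC⟩ := hC.exists_mem
  rw [← integral_neg]
  refine (hasDerivAt_integral_of_dominated_loc_of_deriv_le
    (F := fun t x => Real.log (1 - (x - μ) * t))
    (F' := fun t x => -((x - μ) / (1 - (x - μ) * t)))
    (bound := fun _ => C) hs
    (.of_forall fun t => (by fun_prop : Measurable _).aestronglyMeasurable)
    (integrable_log_one_sub_mul hle hint hν) (by fun_prop : Measurable _).aestronglyMeasurable ?_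
    (integrable_const C) ?_).2
  · filter_upwards [hle] with x hx t ht
    simpa only [norm_neg, Real.norm_eq_abs] using (hsC t ht x hx).2
  · filter_upwards [hle] with x hx t ht
    exact hasDerivAt_log_one_sub_mul (hsC t ht x hx).1.ne'

theorem hasDerivAt_integral_div_one_sub_mul (hle : ∀ᵐ x ∂F, x ≤ 1)
    (hν : ν ∈ Ioo 0 (1 - μ)⁻¹) :
    HasDerivAt (fun ν' => ∫ x, (x - μ) / (1 - (x - μ) * ν') ∂F)
      (∫ x, (x - μ) ^ 2 / (1 - (x - μ) * ν) ^ 2 ∂F) ν := by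
  obtain ⟨C, hC⟩ := eventually_abs_div_one_sub_mul_le hν
  obtain ⟨s, hs, hsC⟩ := hC.exists_mem
  have hint : Integrable (fun x => (x - μ) / (1 - (x - μ) * ν)) F := by
    refine Integrable.mono' (integrable_const C)
      (by fun_prop : Measurable _).aestronglyMeasurable ?_
    filter_upwards [hle] with x hx
    exact (hsC ν (mem_of_mem_nhds hs) x hx).2
  refine (hasDerivAt_integral_of_dominated_loc_of_deriv_le
    (F := fun t x => (x - μ) / (1 - (x - μ) * t))
    (F' := fun t x => (x - μ) ^ 2 / (1 - (x - μ) * t) ^ 2)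
    (bound := fun _ => C ^ 2) hs
    (.of_forall fun t => (by fun_prop : Measurable _).aestronglyMeasurable)
    hint (by fun_prop : Measurable _).aestronglyMeasurable ?_ (integrable_const _) ?_).2
  · filter_upwards [hle] with x hx t ht
    rw [Real.norm_eq_abs, ← div_pow, abs_pow]
    exact pow_le_pow_left₀ (abs_nonneg _) (hsC t ht x hx).2 2
  · filter_upwards [hle] with x hx t ht
    exact hasDerivAt_div_one_sub_mul (hsC t ht x hx).1.ne'

end

theorem stmt12_general (F : Measure ℝ) [IsProbabilityMeasure F] (hsupp : F (Set.Ioi 1) = 0)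
    (hint : Integrable (fun x : ℝ => x) F) (μ : ℝ) :
    ∀ ν ∈ Set.Ioo (0 : ℝ) (1 - μ)⁻¹,
      HasDerivAt (fun ν' => ∫ x, Real.log (1 - (x - μ) * ν') ∂F)
        (-∫ x, (x - μ) / (1 - (x - μ) * ν) ∂F) ν ∧
      HasDerivAt (fun ν' => -∫ x, (x - μ) / (1 - (x - μ) * ν') ∂F)
        (-∫ x, (x - μ) ^ 2 / (1 - (x - μ) * ν) ^ 2 ∂F) ν := by
  have hle : ∀ᵐ x ∂F, x ≤ 1 :=
    measure_mono_null (fun x (hx : ¬x ≤ 1) => lt_of_not_ge hx) hsupp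
  exact fun ν hν => ⟨hasDerivAt_integral_log_one_sub_mul hle hint hν,
    (hasDerivAt_integral_div_one_sub_mul hle hν).neg⟩

/-- For `F` supported in `(-∞,1]` with finite mean and `μ < 1`, the
function `ν ↦ L(ν;F,μ) = ∫ log(1-(x-μ)ν) dF` is twice differentiable on
`(0, 1/(1-μ))`, with `L'(ν) = -∫ (x-μ)/(1-(x-μ)ν) dF` and
`L''(ν) = -∫ (x-μ)²/(1-(x-μ)ν)² dF`. -/
theorem stmt12 (F : Measure ℝ) [IsProbabilityMeasure F] (hsupp : F (Set.Ioi 1) = 0)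
    (hint : Integrable (fun x : ℝ => x) F) (μ : ℝ) (hμ : μ < 1) :
    ∀ ν ∈ Set.Ioo (0 : ℝ) (1 - μ)⁻¹,
      HasDerivAt (fun ν' => ∫ x, Real.log (1 - (x - μ) * ν') ∂F)
        (-∫ x, (x - μ) / (1 - (x - μ) * ν) ∂F) ν ∧
      HasDerivAt (fun ν' => -∫ x, (x - μ) / (1 - (x - μ) * ν') ∂F)
        (-∫ x, (x - μ) ^ 2 / (1 - (x - μ) * ν) ^ 2 ∂F) ν :=
  stmt12_general F hsupp hint μ
end
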